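/- For every problem f :⊆ ℕ^ℕ ⇉ ℕ^ℕ the following are equivalent: (i) DIS ≤*_W f; (ii) DIS ≤*_sW f; (iii) f is effectively discontinuous. -/

import Mathlib

noncomputable section

/-- Baire space `ℕ^ℕ`. -/
abbrev Baire : Type := ℕ → ℕ

/-- The Cantor pairing `⟨n,k⟩ = (n+k)(n+k+1)/2 + k`. -/
def cpair (n k : ℕ) : ℕ := (n + k) * (n + k + 1) / 2 + k

/-- The inverse of the Cantor pairing. -/
noncomputable def cunpair (m : ℕ) : ℕ × ℕ :=
  Classical.epsilon fun x : ℕ × ℕ => cpair x.1 x.2 = m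

/-- A fixed bijective numbering `w : ℕ → List ℕ` of finite words. -/
def word (n : ℕ) : List ℕ := Denumerable.ofNat (List ℕ) n

/-- `l` is a finite prefix of the infinite sequence `p`. -/
def IsPrefixOf (l : List ℕ) (p : Baire) : Prop := l = (List.range l.length).map p

/-- Two words are comparable in the prefix order. -/
def WordComparable (u v : List ℕ) : Prop := u <+: v ∨ v <+: u

/-- The word `w(n_i)` decoded from the `i`-th entry of the code `q`. -/
noncomputable def wn (q : Baire) (i : ℕ) : List ℕ := word (cunpair (q i)).1

/-- The word `w(k_i)` decoded from the `i`-th entry of the code `q`. -/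
noncomputable def wk (q : Baire) (i : ℕ) : List ℕ := word (cunpair (q i)).2

/-- The code `q` is consistent. -/
def ConsistentCode (q : Baire) : Prop :=
  ∀ i j, WordComparable (wn q i) (wn q j) → WordComparable (wk q i) (wk q j)

/-- The continuous partial function `Φ_q :⊆ ℕ^ℕ → ℕ^ℕ` coded by `q`. -/
noncomputable def Phi (q : Baire) : Baire →. Baire := fun p =>
  ⟨ConsistentCode q ∧ ∀ m : ℕ, ∃ i, IsPrefixOf (wn q i) p ∧ m < (wk q i).length,
   fun _ => Classical.epsilon fun x : Baire =>
      ∀ i, IsPrefixOf (wn q i) p → IsPrefixOf (wk q i) x⟩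

/-- The pairing `⟨q,p⟩` on Baire space. -/
def bpair (q p : Baire) : Baire := fun n => if n % 2 = 0 then q (n / 2) else p (n / 2)

/-- Even part of a sequence. -/
def evens (r : Baire) : Baire := fun n => r (2 * n)

/-- Odd part of a sequence. -/
def odds (r : Baire) : Baire := fun n => r (2 * n + 1)

/-- The universal function `U(⟨q,p⟩) = Φ_q(p)`. -/
noncomputable def U : Baire →. Baire := fun r => Phi (evens r) (odds r)

/-- `h` is monotone for the prefix order. -/
def MonotoneWord (h : List ℕ → List ℕ) : Prop := ∀ u v, u <+: v → h u <+: h v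

/-- `h` approximates the partial function `F`. -/
def Approximates (h : List ℕ → List ℕ) (F : Baire →. Baire) : Prop :=
  ∀ p, ∀ hp : (F p).Dom,
    (∀ v, IsPrefixOf v p → IsPrefixOf (h v) ((F p).get hp)) ∧
    (∀ m : ℕ, ∃ v, IsPrefixOf v p ∧ m < (h v).length)

/-- `F :⊆ ℕ^ℕ → ℕ^ℕ` is continuous: some monotone word function approximates it. -/
def ContinuousPF (F : Baire →. Baire) : Prop := ∃ h, MonotoneWord h ∧ Approximates h F

/-- `F :⊆ ℕ^ℕ → ℕ^ℕ` is computable: some computable monotone word function approximates it. -/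
def ComputablePF (F : Baire →. Baire) : Prop :=
  ∃ h, Computable h ∧ MonotoneWord h ∧ Approximates h F

/-- A total function is computable iff it is computable as a partial function with full domain. -/
def ComputableTotal (F : Baire → Baire) : Prop := ComputablePF fun p => Part.some (F p)

/-- A problem (multivalued function on Baire space). -/
abbrev Problem : Type := Baire → Set Baire

/-- `F` is a realizer of the problem `f`. -/
def Realizes (F : Baire →. Baire) (f : Problem) : Prop :=
  ∀ p, (f p).Nonempty → ∃ h : (F p).Dom, (F p).get h ∈ f p

/-- `f` is continuous: it has a continuous realizer. -/
def ContinuousProblem (f : Problem) : Prop := ∃ F, ContinuousPF F ∧ Realizes F f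

/-- The discontinuity problem `DIS`. -/
noncomputable def DIS : Problem := fun p => {q | q ∉ U p}

/-- `D` is a discontinuity function for `f`. -/
def DiscontinuityFunction (D : Baire → Baire) (f : Problem) : Prop :=
  ∀ q, (f (D q)).Nonempty ∧ ∀ y ∈ Phi q (D q), y ∉ f (D q)

/-- `f` is computably discontinuous. -/
def ComputablyDiscontinuous (f : Problem) : Prop :=
  ∃ D, ComputableTotal D ∧ DiscontinuityFunction D f

/-- `f` is effectively discontinuous. -/
def EffectivelyDiscontinuous (f : Problem) : Prop :=
  ∃ D : Baire → Baire, Continuous D ∧ DiscontinuityFunction D f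

/-- Weihrauch reducibility `f ≤_W g`. -/
def WeihrauchRed (f g : Problem) : Prop :=
  ∃ H K : Baire →. Baire, ComputablePF H ∧ ComputablePF K ∧
    ∀ G : Baire →. Baire, Realizes G g →
      Realizes (fun p => (K p).bind fun s => (G s).bind fun t => H (bpair p t)) f

/-- Strong Weihrauch reducibility `f ≤_sW g`. -/
def StrongWeihrauchRed (f g : Problem) : Prop :=
  ∃ H K : Baire →. Baire, ComputablePF H ∧ ComputablePF K ∧
    ∀ G : Baire →. Baire, Realizes G g →
      Realizes (fun p => (K p).bind fun s => (G s).bind fun t => H t) f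

/-- Continuous Weihrauch reducibility `f ≤*_W g`. -/
def ContWeihrauchRed (f g : Problem) : Prop :=
  ∃ H K : Baire →. Baire, ContinuousPF H ∧ ContinuousPF K ∧
    ∀ G : Baire →. Baire, Realizes G g →
      Realizes (fun p => (K p).bind fun s => (G s).bind fun t => H (bpair p t)) f

/-- Continuous strong Weihrauch reducibility `f ≤*_sW g`. -/
def ContStrongWeihrauchRed (f g : Problem) : Prop :=
  ∃ H K : Baire →. Baire, ContinuousPF H ∧ ContinuousPF K ∧
    ∀ G : Baire →. Baire, Realizes G g →
      Realizes (fun p => (K p).bind fun s => (G s).bind fun t => H t) f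

/-- Concatenation of the first `n` moves. -/
def concatN (ms : ℕ → List ℕ) (n : ℕ) : List ℕ := ((List.range n).map ms).flatten

/-- The concatenated play is infinite. -/
def PlayInf (ms : ℕ → List ℕ) : Prop := ∀ m : ℕ, ∃ n, m < (concatN ms n).length

/-- The infinite sequence determined by an infinite play. -/
noncomputable def playLim (ms : ℕ → List ℕ) : Baire :=
  Classical.epsilon fun p : Baire => ∀ n, IsPrefixOf (concatN ms n) p

/-- Player II wins the run of the Wadge game of `f` given by the moves `xs` of I and `ys` of II. -/
def WadgeIIWins (f : Problem) (xs ys : ℕ → List ℕ) : Prop :=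
  (PlayInf xs ∧ (f (playLim xs)).Nonempty) → (PlayInf ys ∧ playLim ys ∈ f (playLim xs))

/-- The list of first `n` moves. -/
def histW (xs : ℕ → List ℕ) (n : ℕ) : List (List ℕ) := (List.range n).map xs

/-- `σ` is a winning strategy for Player II in the Wadge game of `f`. -/
def WadgeWinningII (f : Problem) (σ : List (List ℕ) → List ℕ) : Prop :=
  ∀ xs : ℕ → List ℕ, WadgeIIWins f xs fun i => σ (histW xs (i + 1))

/-- `σ` is a winning strategy for Player I in the Wadge game of `f`. -/
def WadgeWinningI (f : Problem) (σ : List (List ℕ) → List ℕ) : Prop :=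
  ∀ ys : ℕ → List ℕ, ¬ WadgeIIWins f (fun i => σ (histW ys i)) ys

/-- The list of first `n` values of a sequence. -/
def histN (x : Baire) (n : ℕ) : List ℕ := (List.range n).map x

/-- Player II wins the run `(x,y)` of the Lipschitz game of `f`. -/
def LipIIWins (f : Problem) (x y : Baire) : Prop := (f x).Nonempty → y ∈ f x

/-- `σ` is a winning strategy for Player II in the Lipschitz game of `f`. -/
def LipWinningII (f : Problem) (σ : List ℕ → ℕ) : Prop :=
  ∀ x : Baire, LipIIWins f x fun i => σ (histN x (i + 1))

/-- `σ` is a winning strategy for Player I in the Lipschitz game of `f`. -/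
def LipWinningI (f : Problem) (σ : List ℕ → ℕ) : Prop :=
  ∀ y : Baire, ¬ LipIIWins f (fun i => σ (histN y i)) y

/-- `σ` is a winning strategy for Player II in the Gale–Stewart game `A`. -/
def GSWinningII (A : Set Baire) (σ : List ℕ → ℕ) : Prop :=
  ∀ x : Baire, bpair x (fun i => σ (histN x (i + 1))) ∈ A

/-- `σ` is a winning strategy for Player I in the Gale–Stewart game `A`. -/
def GSWinningI (A : Set Baire) (σ : List ℕ → ℕ) : Prop :=
  ∀ y : Baire, bpair (fun i => σ (histN y i)) y ∉ A

/-- The totalization `Tf` of `f`. -/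
def Totalization (f : Problem) : Problem := fun p => {q | (f p).Nonempty → q ∈ f p}

/-- The paired graph `⟨graph(Tf)⟩ ⊆ ℕ^ℕ`. -/
def pairedGraph (f : Problem) : Set Baire :=
  {r | ∃ x y : Baire, r = bpair x y ∧ y ∈ Totalization f x}

/-- Domain of the word concatenation map `w*`. -/
def wstarDom (p : Baire) : Prop := PlayInf fun i => word (p i)

/-- The word concatenation map `w* : p ↦ w(p 0) w(p 1) ⋯` (on its domain). -/
noncomputable def wstar (p : Baire) : Baire := playLim fun i => word (p i)

/-- The problem `f^w = w*⁻¹ ∘ f ∘ w*`. -/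
noncomputable def wordLift (f : Problem) : Problem := fun p =>
  {q | wstarDom p ∧ (f (wstar p)).Nonempty ∧ wstarDom q ∧ wstar q ∈ f (wstar p)}

/-- The `i`-th component of a tupled sequence. -/
def tupleComp (p : Baire) (i : ℕ) : Baire := fun n => p (cpair i n)

/-- The parallelization `⟨f⟩` of `f`. -/
def Parallelization (f : Problem) : Problem := fun p =>
  {q | ∀ i, tupleComp q i ∈ f (tupleComp p i)}

/-- Turing reducibility: `p` is computable relative to the oracle `q`. -/
def TuringLe (p q : Baire) : Prop := ∃ F : Baire →. Baire, ComputablePF F ∧ p ∈ F q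

end

/-!
If `D` witnesses effective discontinuity, then `DIS` reduces strongly to `f` via `p ↦ D (c p)`,
where `c p` is a code, depending continuously on `p`, of the constant function with value `U p`:
a solution `t ∈ f (D (c p))` differs from `Φ_{c p} (D (c p)) = U p`, so `t ∈ DIS p`.

Conversely, let `H, K` witness `DIS ≤*_W f`. A continuous version of the recursion theorem
produces, continuously in `q`, a point `p_q = ⟨e_q, q⟩` with `U p_q = H ⟨p_q, Φ_q (K p_q)⟩`
whenever the right-hand side is defined: the `n`-th entry of `e_q` only needs `e_q` below `n`.
Then `D q := K p_q` is a discontinuity function for `f`: if `y = Φ_q (D q)` solved `f (D q)`,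
a realizer of `f` answering `y` at `D q` would make `H ⟨p_q, y⟩ = U p_q` a solution of
`DIS p_q`, which is absurd.
-/

open Filter Topology PiNat

lemma cpair_lt_cpair {n k n' k' : ℕ} (h : n + k < n' + k') : cpair n k < cpair n' k' := by
  have key : (n + k) * (n + k + 1) / 2 + (n + k + 1) ≤ (n' + k') * (n' + k' + 1) / 2 := by
    rw [← Nat.add_mul_div_left _ _ two_pos]
    exact Nat.div_le_div_right (by nlinarith)
  unfold cpair
  omega

lemma cpair_injective : Function.Injective fun x : ℕ × ℕ => cpair x.1 x.2 := by
  rintro ⟨n, k⟩ ⟨n', k'⟩ h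
  simp only at h
  rcases lt_trichotomy (n + k) (n' + k') with hlt | heq | hgt
  · exact absurd h (cpair_lt_cpair hlt).ne
  · unfold cpair at h
    rw [heq] at h
    simp only [Prod.mk.injEq]
    omega
  · exact absurd h (cpair_lt_cpair hgt).ne'

lemma cunpair_cpair (n k : ℕ) : cunpair (cpair n k) = (n, k) :=
  cpair_injective (Classical.epsilon_spec (p := fun x : ℕ × ℕ => cpair x.1 x.2 = cpair n k)
    ⟨(n, k), rfl⟩)

lemma wn_wk_of_apply_eq {q : Baire} {i : ℕ} {a b : List ℕ}
    (h : q i = cpair (Encodable.encode a) (Encodable.encode b)) : wn q i = a ∧ wk q i = b := by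
  simp only [wn, wk, word, h, cunpair_cpair, Denumerable.ofNat_encode, and_self]

@[simp]
lemma histN_length (p : Baire) (n : ℕ) : (histN p n).length = n := by
  simp [histN]

lemma histN_succ (p : Baire) (n : ℕ) : histN p (n + 1) = histN p n ++ [p n] := by
  simp [histN, List.range_succ]

lemma histN_congr {x y : Baire} {n : ℕ} (h : ∀ i < n, x i = y i) : histN x n = histN y n :=
  List.map_congr_left fun i hi => h i (List.mem_range.1 hi)

lemma isPrefixOf_histN (p : Baire) (n : ℕ) : IsPrefixOf (histN p n) p := by
  rw [IsPrefixOf, histN_length]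
  rfl

lemma isPrefixOf_nil (p : Baire) : IsPrefixOf [] p := rfl

lemma isPrefixOf_iff_getElem {l : List ℕ} {p : Baire} :
    IsPrefixOf l p ↔ ∀ i (hi : i < l.length), l[i] = p i := by
  constructor
  · intro h i hi
    simpa using List.getElem_of_eq h hi
  · intro h
    exact List.ext_getElem (by simp) fun i hi _ => by simp [h i hi]

lemma IsPrefixOf.getElem {l : List ℕ} {p : Baire} (h : IsPrefixOf l p) {i : ℕ}
    (hi : i < l.length) : l[i] = p i :=
  isPrefixOf_iff_getElem.1 h i hi

lemma isPrefixOf_histN_iff {p x : Baire} {n : ℕ} :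
    IsPrefixOf (histN p n) x ↔ x ∈ cylinder p n := by
  simp [isPrefixOf_iff_getElem, mem_cylinder_iff, histN, eq_comm]

lemma isPrefixOf_congr {l : List ℕ} {x y : Baire} (h : ∀ i < l.length, x i = y i) :
    IsPrefixOf l x ↔ IsPrefixOf l y := by
  simp only [isPrefixOf_iff_getElem]
  exact forall₂_congr fun i hi => by rw [h i hi]

lemma IsPrefixOf.of_prefix {u v : List ℕ} {p : Baire} (hv : IsPrefixOf v p) (huv : u <+: v) :
    IsPrefixOf u p :=
  isPrefixOf_iff_getElem.2 fun i hi => by rw [huv.getElem hi, hv.getElem]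

lemma IsPrefixOf.prefix_of_length_le {u v : List ℕ} {p : Baire} (hu : IsPrefixOf u p)
    (hv : IsPrefixOf v p) (h : u.length ≤ v.length) : u <+: v := by
  rw [List.prefix_iff_eq_take]
  refine List.ext_getElem (by simp; omega) fun i h₁ h₂ => ?_
  simp [hu.getElem h₁, hv.getElem]

lemma IsPrefixOf.wordComparable {u v : List ℕ} {p : Baire} (hu : IsPrefixOf u p)
    (hv : IsPrefixOf v p) : WordComparable u v :=
  (le_total u.length v.length).imp (hu.prefix_of_length_le hv) (hv.prefix_of_length_le hu)

lemma exists_forall_isPrefixOf {ι : Type*} {w : ι → List ℕ}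
    (hw : ∀ i j, WordComparable (w i) (w j)) (hub : ∀ m, ∃ i, m < (w i).length) :
    ∃ x : Baire, ∀ i, IsPrefixOf (w i) x := by
  choose c hc using hub
  refine ⟨fun n => (w (c n))[n]'(hc n), fun i => isPrefixOf_iff_getElem.2 fun n hn => ?_⟩
  rcases hw i (c n) with h | h
  · exact h.getElem hn
  · exact (h.getElem (hc n)).symm

lemma eq_of_forall_isPrefixOf {ι : Type*} {w : ι → List ℕ} (hub : ∀ m, ∃ i, m < (w i).length)
    {x y : Baire} (hx : ∀ i, IsPrefixOf (w i) x) (hy : ∀ i, IsPrefixOf (w i) y) : x = y :=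
  funext fun n => by
    obtain ⟨i, hi⟩ := hub n
    rw [← (hx i).getElem hi, (hy i).getElem hi]

lemma isPrefixOf_wk_of_mem_Phi {q p y : Baire} (hy : y ∈ Phi q p) {i : ℕ}
    (hi : IsPrefixOf (wn q i) p) : IsPrefixOf (wk q i) y := by
  obtain ⟨⟨hcons, hub⟩, rfl⟩ := hy
  have hex : ∃ x : Baire, ∀ i, IsPrefixOf (wn q i) p → IsPrefixOf (wk q i) x := by
    obtain ⟨x, hx⟩ := exists_forall_isPrefixOf (w := fun i : {i // IsPrefixOf (wn q i) p} => wk q i)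
      (fun i j => hcons i j (i.2.wordComparable j.2))
      (fun m => let ⟨i, hi, hm⟩ := hub m; ⟨⟨i, hi⟩, hm⟩)
    exact ⟨x, fun i hi => hx ⟨i, hi⟩⟩
  exact Classical.epsilon_spec hex i hi

lemma mem_Phi_of_forall_isPrefixOf {q p y : Baire} (hy : ∀ i, IsPrefixOf (wk q i) y)
    (hub : ∀ m, ∃ i, IsPrefixOf (wn q i) p ∧ m < (wk q i).length) : y ∈ Phi q p := by
  have hdom : (Phi q p).Dom := ⟨fun i j _ => (hy i).wordComparable (hy j), hub⟩
  refine ⟨hdom, eq_of_forall_isPrefixOf (w := fun i : {i // IsPrefixOf (wn q i) p} => wk q i)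
    (fun m => let ⟨i, hi, hm⟩ := hub m; ⟨⟨i, hi⟩, hm⟩)
    (fun i => isPrefixOf_wk_of_mem_Phi (Part.get_mem hdom) i.2) (fun i => hy i)⟩

lemma evens_bpair (x y : Baire) : evens (bpair x y) = x := by
  funext n
  simp [evens, bpair]

lemma odds_bpair (x y : Baire) : odds (bpair x y) = y := by
  funext n
  simp [odds, bpair, Nat.add_mod, Nat.add_div]

lemma U_bpair (x y : Baire) : U (bpair x y) = Phi x y := by
  rw [U, evens_bpair, odds_bpair]

lemma DIS_nonempty (p : Baire) : (DIS p).Nonempty := by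
  by_cases h₀ : (fun _ => 0 : Baire) ∈ U p
  · refine ⟨fun _ => 1, fun h₁ => ?_⟩
    simpa using congrFun (Part.mem_unique h₀ h₁) 0
  · exact ⟨_, h₀⟩

lemma cylinder_mem_nhds (x : Baire) (n : ℕ) : cylinder x n ∈ 𝓝 x :=
  (isOpen_cylinder (fun _ => ℕ) x n).mem_nhds (self_mem_cylinder x n)

lemma exists_cylinder_subset {x : Baire} {s : Set Baire} (hs : s ∈ 𝓝 x) :
    ∃ n, cylinder x n ⊆ s := by
  obtain ⟨_, ⟨y, n, rfl⟩, hx, hsub⟩ := (isTopologicalBasis_cylinders fun _ => ℕ).mem_nhds_iff.1 hs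
  exact ⟨n, mem_cylinder_iff_eq.1 hx ▸ hsub⟩

lemma continuous_of_eventually_apply_eq {X : Type*} [TopologicalSpace X] {F : X → Baire}
    (h : ∀ x n, ∀ᶠ y in 𝓝 x, F y n = F x n) : Continuous F :=
  continuous_pi fun n => continuous_iff_continuousAt.2 fun x =>
    (tendsto_pure.2 (h x n)).mono_right (pure_le_nhds _)

lemma Continuous.bpair {X : Type*} [TopologicalSpace X] {f g : X → Baire} (hf : Continuous f)
    (hg : Continuous g) : Continuous fun x => bpair (f x) (g x) :=
  continuous_pi fun n => by
    by_cases h : n % 2 = 0 <;> simp only [_root_.bpair, h, if_true, if_false] <;> fun_prop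

lemma continuous_odds : Continuous odds :=
  continuous_pi fun n => continuous_apply (2 * n + 1)

lemma Approximates.isPrefixOf {h : List ℕ → List ℕ} {F : Baire →. Baire} (hF : Approximates h F)
    {p y : Baire} (hy : y ∈ F p) {v : List ℕ} (hv : IsPrefixOf v p) : IsPrefixOf (h v) y := by
  obtain ⟨hp, rfl⟩ := hy
  exact (hF p hp).1 v hv

lemma Approximates.exists_length_gt {h : List ℕ → List ℕ} {F : Baire →. Baire}
    (hF : Approximates h F) (hmono : MonotoneWord h) {p : Baire} (hp : (F p).Dom) (m : ℕ) :
    ∃ N, ∀ v, IsPrefixOf v p → N ≤ v.length → m < (h v).length := by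
  obtain ⟨u, hu, hm⟩ := (hF p hp).2 m
  exact ⟨u.length, fun v hv hle =>
    hm.trans_le (hmono _ _ (hu.prefix_of_length_le hv hle)).length_le⟩

lemma ContinuousPF.continuous_get_comp {K : Baire →. Baire} (hK : ContinuousPF K)
    {X : Type*} [TopologicalSpace X] {g : X → Baire} (hg : Continuous g)
    (hdom : ∀ x, (K (g x)).Dom) : Continuous fun x => (K (g x)).get (hdom x) := by
  obtain ⟨h, hmono, happ⟩ := hK
  refine continuous_of_eventually_apply_eq fun x n => ?_
  obtain ⟨N, hN⟩ := happ.exists_length_gt hmono (hdom x) n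
  have hn : n < (h (histN (g x) N)).length := hN _ (isPrefixOf_histN _ _) (by simp)
  filter_upwards [hg.continuousAt.preimage_mem_nhds (cylinder_mem_nhds (g x) N)] with y hy
  rw [← (happ.isPrefixOf (Part.get_mem _) (isPrefixOf_histN_iff.2 hy)).getElem hn,
    (happ.isPrefixOf (Part.get_mem _) (isPrefixOf_histN _ _)).getElem hn]

def extSeq (v : List ℕ) : Baire := fun n => v.getD n 0

lemma isPrefixOf_extSeq (v : List ℕ) : IsPrefixOf v (extSeq v) :=
  isPrefixOf_iff_getElem.2 fun i hi => by simp [extSeq, hi]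

def DeterminesBelow (F : Baire → Baire) (v : List ℕ) (m : ℕ) : Prop :=
  ∀ x y, IsPrefixOf v x → IsPrefixOf v y → ∀ i < m, F x i = F y i

section ContinuousApprox

open scoped Classical

noncomputable def determinedLength (F : Baire → Baire) (v : List ℕ) : ℕ :=
  Nat.findGreatest (DeterminesBelow F v) v.length

noncomputable def continuousApprox (F : Baire → Baire) (v : List ℕ) : List ℕ :=
  histN (F (extSeq v)) (determinedLength F v)

variable {F : Baire → Baire}

lemma determinesBelow_determinedLength (v : List ℕ) :
    DeterminesBelow F v (determinedLength F v) :=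
  Nat.findGreatest_spec (m := 0) (Nat.zero_le _) fun _ _ _ _ _ hi => absurd hi (Nat.not_lt_zero _)

lemma determinedLength_mono {u v : List ℕ} (h : u <+: v) :
    determinedLength F u ≤ determinedLength F v :=
  Nat.le_findGreatest ((Nat.findGreatest_le _).trans h.length_le) fun x y hx hy =>
    determinesBelow_determinedLength u x y (hx.of_prefix h) (hy.of_prefix h)

lemma continuousApprox_isPrefixOf {v : List ℕ} {x : Baire} (hv : IsPrefixOf v x) :
    IsPrefixOf (continuousApprox F v) (F x) := by
  rw [continuousApprox, histN_congr fun i hi =>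
    determinesBelow_determinedLength v _ _ (isPrefixOf_extSeq v) hv i hi]
  exact isPrefixOf_histN _ _

lemma monotoneWord_continuousApprox : MonotoneWord (continuousApprox F) := fun u v h =>
  (continuousApprox_isPrefixOf ((isPrefixOf_extSeq v).of_prefix h)).prefix_of_length_le
    (continuousApprox_isPrefixOf (isPrefixOf_extSeq v))
    (by simpa [continuousApprox] using determinedLength_mono h)

lemma exists_lt_length_continuousApprox (hF : Continuous F) (p : Baire) (m : ℕ) :
    ∃ v, IsPrefixOf v p ∧ m < (continuousApprox F v).length := by
  obtain ⟨N, hN⟩ := exists_cylinder_subset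
    (hF.continuousAt.preimage_mem_nhds (cylinder_mem_nhds (F p) (m + 1)))
  have hagree : ∀ x, IsPrefixOf (histN p (N + m + 1)) x → ∀ i < m + 1, F x i = F p i :=
    fun x hx => mem_cylinder_iff.1 <| hN <| cylinder_anti p (by omega) (isPrefixOf_histN_iff.1 hx)
  have hdet : DeterminesBelow F (histN p (N + m + 1)) (m + 1) := fun x y hx hy i hi => by
    rw [hagree x hx i hi, hagree y hy i hi]
  refine ⟨histN p (N + m + 1), isPrefixOf_histN _ _, ?_⟩
  have hlen : m + 1 ≤ determinedLength F (histN p (N + m + 1)) := Nat.le_findGreatest (by simp) hdet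
  simpa [continuousApprox] using hlen

lemma continuousPF_of_continuous (hF : Continuous F) : ContinuousPF fun p => Part.some (F p) :=
  ⟨continuousApprox F, monotoneWord_continuousApprox, fun p _ =>
    ⟨fun _ hv => continuousApprox_isPrefixOf hv, exists_lt_length_continuousApprox hF p⟩⟩

end ContinuousApprox

lemma ContinuousPF.comp_continuous {H : Baire →. Baire} (hH : ContinuousPF H) {g : Baire → Baire}
    (hg : Continuous g) : ContinuousPF fun r => H (g r) := by
  obtain ⟨h, hmono, happ⟩ := hH
  refine ⟨fun v => h (continuousApprox g v), fun u v huv =>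
    hmono _ _ (monotoneWord_continuousApprox u v huv), fun r hr =>
    ⟨fun v hv => (happ (g r) hr).1 _ (continuousApprox_isPrefixOf hv), fun m => ?_⟩⟩
  obtain ⟨N, hN⟩ := happ.exists_length_gt hmono hr m
  obtain ⟨v, hv, hlen⟩ := exists_lt_length_continuousApprox hg r N
  exact ⟨v, hv, hN _ (continuousApprox_isPrefixOf hv) hlen.le⟩

noncomputable def choiceRealizer (f : Problem) : Baire →. Baire :=
  fun s => ⟨(f s).Nonempty, fun h => h.some⟩

lemma realizes_choiceRealizer (f : Problem) : Realizes (choiceRealizer f) f :=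
  fun _ hs => ⟨hs, hs.some_mem⟩

lemma mem_of_mem_choiceRealizer {f : Problem} {s t : Baire} (ht : t ∈ choiceRealizer f s) :
    t ∈ f s := by
  obtain ⟨hs, rfl⟩ := ht
  exact hs.some_mem

lemma realizes_of_forall_exists_mem {F : Baire →. Baire} {f : Problem}
    (h : ∀ p, (f p).Nonempty → ∃ a ∈ F p, a ∈ f p) : Realizes F f := fun p hp =>
  let ⟨_, ⟨hd, hget⟩, ha⟩ := h p hp
  ⟨hd, hget ▸ ha⟩

open scoped Classical in
lemma Realizes.update {G : Baire →. Baire} {f : Problem} (hG : Realizes G f) {s y : Baire}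
    (hy : y ∈ f s) : Realizes (fun p => if p = s then Part.some y else G p) f := by
  refine realizes_of_forall_exists_mem fun p hp => ?_
  by_cases hps : p = s
  · subst hps
    exact ⟨y, by simp, hy⟩
  · obtain ⟨hd, hget⟩ := hG p hp
    exact ⟨_, by simpa [hps] using Part.get_mem hd, hget⟩

lemma exists_mem_of_realizes_DIS {H K G : Baire →. Baire}
    (hred : Realizes (fun p => (K p).bind fun s => (G s).bind fun t => H (bpair p t)) DIS)
    (p : Baire) : ∃ s ∈ K p, ∃ t ∈ G s, ∃ a ∈ H (bpair p t), a ∉ U p := by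
  obtain ⟨hd, ha⟩ := hred p (DIS_nonempty p)
  obtain ⟨s, hs, hst⟩ := Part.mem_bind_iff.1 (Part.get_mem hd)
  obtain ⟨t, ht, hta⟩ := Part.mem_bind_iff.1 hst
  exact ⟨s, hs, t, ht, _, hta, ha⟩

lemma ContStrongWeihrauchRed.contWeihrauchRed {f g : Problem} (h : ContStrongWeihrauchRed f g) :
    ContWeihrauchRed f g := by
  obtain ⟨H, K, hH, hK, hred⟩ := h
  exact ⟨fun r => H (odds r), K, hH.comp_continuous continuous_odds, hK, by
    simpa only [odds_bpair] using hred⟩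

open scoped Classical in
noncomputable def constCode (r : Baire) : Baire := fun j =>
  cpair (Encodable.encode ([] : List ℕ)) (Encodable.encode
    (if IsPrefixOf (wn (evens r) j) (odds r) then wk (evens r) j else []))

lemma mem_Phi_constCode {r y : Baire} (hy : y ∈ U r) (p : Baire) : y ∈ Phi (constCode r) p := by
  have hcode := fun j => wn_wk_of_apply_eq (q := constCode r) (i := j) rfl
  refine mem_Phi_of_forall_isPrefixOf (fun j => ?_) (fun m => ?_)
  · rw [(hcode j).2]
    split_ifs with h
    · exact isPrefixOf_wk_of_mem_Phi hy h
    · exact isPrefixOf_nil y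
  · obtain ⟨-, hub⟩ := hy.fst
    obtain ⟨j, hj, hm⟩ := hub m
    refine ⟨j, (hcode j).1 ▸ isPrefixOf_nil p, ?_⟩
    rwa [(hcode j).2, if_pos hj]

open scoped Classical in
lemma continuous_constCode : Continuous constCode :=
  continuous_of_eventually_apply_eq fun r j => by
    filter_upwards [cylinder_mem_nhds r (2 * (j + (wn (evens r) j).length) + 1)] with r' hr'
    rw [mem_cylinder_iff] at hr'
    have hj : evens r' j = evens r j := hr' _ (by omega)
    have hwn : wn (evens r') j = wn (evens r) j := by rw [wn, hj, wn]
    have hwk : wk (evens r') j = wk (evens r) j := by rw [wk, hj, wk]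
    have hodds : ∀ i < (wn (evens r) j).length, odds r' i = odds r i := fun i hi => hr' _ (by omega)
    have hcond : IsPrefixOf (wn (evens r') j) (odds r') ↔ IsPrefixOf (wn (evens r) j) (odds r) := by
      rw [hwn, isPrefixOf_congr hodds]
    by_cases h : IsPrefixOf (wn (evens r) j) (odds r)
    · simp only [constCode, if_pos h, if_pos (hcond.2 h), hwk]
    · simp only [constCode, if_neg h, if_neg (mt hcond.1 h)]

lemma contStrongWeihrauchRed_DIS_of_effectivelyDiscontinuous {f : Problem}
    (h : EffectivelyDiscontinuous f) : ContStrongWeihrauchRed DIS f := by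
  obtain ⟨D, hD, hDf⟩ := h
  refine ⟨fun t => Part.some t, fun p => Part.some (D (constCode p)),
    continuousPF_of_continuous continuous_id, continuousPF_of_continuous
    (hD.comp continuous_constCode), fun G hG => realizes_of_forall_exists_mem fun p _ => ?_⟩
  obtain ⟨hne, hdisc⟩ := hDf (constCode p)
  obtain ⟨hd, ht⟩ := hG _ hne
  exact ⟨_, Part.mem_bind_iff.2 ⟨_, Part.mem_some _,
    Part.mem_bind_iff.2 ⟨_, Part.get_mem hd, Part.mem_some _⟩⟩,
    fun hU => hdisc _ (mem_Phi_constCode hU _) ht⟩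

def fixList (F : List ℕ → ℕ) : ℕ → List ℕ
  | 0 => []
  | n + 1 => fixList F n ++ [F (fixList F n)]

def fixSeq (F : List ℕ → ℕ) : Baire := fun n => F (fixList F n)

lemma histN_fixSeq (F : List ℕ → ℕ) (n : ℕ) : histN (fixSeq F) n = fixList F n := by
  induction n with
  | zero => rfl
  | succ n ih => rw [histN_succ, ih]; rfl

lemma fixSeq_apply (F : List ℕ → ℕ) (n : ℕ) : fixSeq F n = F (histN (fixSeq F) n) := by
  rw [histN_fixSeq]
  rfl

lemma continuous_fixSeq {X : Type*} [TopologicalSpace X] {F : X → List ℕ → ℕ}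
    (hF : ∀ x l, ∀ᶠ y in 𝓝 x, F y l = F x l) : Continuous fun x => fixSeq (F x) := by
  have hlist : ∀ x n, ∀ᶠ y in 𝓝 x, fixList (F y) n = fixList (F x) n := by
    intro x n
    induction n with
    | zero => exact Eventually.of_forall fun _ => rfl
    | succ n ih =>
      filter_upwards [ih, hF x (fixList (F x) n)] with y h₁ h₂
      simp only [fixList, h₁, h₂]
  refine continuous_of_eventually_apply_eq fun x n => ?_
  filter_upwards [hlist x n, hF x (fixList (F x) n)] with y h₁ h₂
  simp only [fixSeq, h₁, h₂]

def pairWord (a b : List ℕ) : List ℕ :=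
  (List.range (2 * min a.length b.length)).map fun n =>
    if n % 2 = 0 then a.getD (n / 2) 0 else b.getD (n / 2) 0

@[simp]
lemma length_pairWord (a b : List ℕ) : (pairWord a b).length = 2 * min a.length b.length := by
  simp [pairWord]

lemma IsPrefixOf.pairWord {a b : List ℕ} {x y : Baire} (ha : IsPrefixOf a x)
    (hb : IsPrefixOf b y) : IsPrefixOf (_root_.pairWord a b) (bpair x y) := by
  refine isPrefixOf_iff_getElem.2 fun n hn => ?_
  simp only [length_pairWord] at hn
  simp only [_root_.pairWord, List.getElem_map, List.getElem_range, bpair]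
  split_ifs
  · rw [List.getD_eq_getElem _ _ (by omega), ha.getElem]
  · rw [List.getD_eq_getElem _ _ (by omega), hb.getElem]

lemma pairWord_histN (x y : Baire) (n : ℕ) :
    pairWord (histN x n) (histN y n) = histN (bpair x y) (2 * n) :=
  ((isPrefixOf_histN x n).pairWord (isPrefixOf_histN y n)).trans (by simp [histN])

noncomputable def candidate (q : Baire) (κ : List ℕ) (j : ℕ) : List ℕ :=
  if wn q j <+: κ then wk q j else []

lemma candidate_isPrefixOf {q s t : Baire} {κ : List ℕ} (hκ : IsPrefixOf κ s) (ht : t ∈ Phi q s)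
    (j : ℕ) : IsPrefixOf (candidate q κ j) t := by
  unfold candidate
  split_ifs with h
  · exact isPrefixOf_wk_of_mem_Phi ht (hκ.of_prefix h)
  · exact isPrefixOf_nil t

section Diagonal

variable (hk hh : List ℕ → List ℕ)

/-- Stage `n = l.length` of the self-referential code `e_q`, given its first `n` entries `l`. On
inputs extending `q↾n` it outputs `hh ⟨P, τ⟩`, where `P = ⟨l, q↾n⟩` is the known part of
`p_q = ⟨e_q, q⟩` and `τ` is the `n.unpair.1`-th output word of `q`, kept only if `hk P`, a prefix
of `K p_q`, already extends the corresponding input word. -/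
noncomputable def diagStage (q : Baire) (l : List ℕ) : ℕ :=
  let P := pairWord l (histN q l.length)
  cpair (Encodable.encode (histN q l.length))
    (Encodable.encode (hh (pairWord P (candidate q (hk P) l.length.unpair.1))))

noncomputable def diagSeq (q : Baire) : Baire := fixSeq (diagStage hk hh q)

noncomputable def diagPoint (q : Baire) : Baire := bpair (diagSeq hk hh q) q

variable {hk hh}

lemma diagSeq_apply (q : Baire) (n : ℕ) :
    diagSeq hk hh q n = cpair (Encodable.encode (histN q n))
      (Encodable.encode (hh (pairWord (histN (diagPoint hk hh q) (2 * n))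
        (candidate q (hk (histN (diagPoint hk hh q) (2 * n))) n.unpair.1)))) := by
  rw [diagSeq, fixSeq_apply]
  simp only [diagStage, histN_length, pairWord_histN]
  rfl

lemma diagStage_congr {q q' : Baire} {l : List ℕ} (h : ∀ i < l.length + 1, q' i = q i) :
    diagStage hk hh q' l = diagStage hk hh q l := by
  have hj : q' l.length.unpair.1 = q l.length.unpair.1 :=
    h _ (Nat.lt_succ_of_le (Nat.unpair_left_le _))
  have hhist : histN q' l.length = histN q l.length := histN_congr fun i hi => h i (by omega)
  unfold diagStage candidate wn wk
  rw [hj, hhist]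

lemma continuous_diagPoint : Continuous (diagPoint hk hh) := by
  have hseq : Continuous (diagSeq hk hh) := continuous_fixSeq fun q l => by
    filter_upwards [cylinder_mem_nhds q (l.length + 1)] with q' hq'
    exact diagStage_congr (mem_cylinder_iff.1 hq')
  exact hseq.bpair continuous_id

lemma mem_U_diagPoint {H K : Baire →. Baire} (hk_mono : MonotoneWord hk) (hK : Approximates hk K)
    (hh_mono : MonotoneWord hh) (hH : Approximates hh H) {q s t y : Baire}
    (hs : s ∈ K (diagPoint hk hh q)) (ht : t ∈ Phi q s) (hy : y ∈ H (bpair (diagPoint hk hh q) t)) :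
    y ∈ U (diagPoint hk hh q) := by
  set p := diagPoint hk hh q
  have hcode := fun n => wn_wk_of_apply_eq (diagSeq_apply (hk := hk) (hh := hh) q n)
  have hκ : ∀ n, IsPrefixOf (hk (histN p (2 * n))) s := fun n =>
    hK.isPrefixOf hs (isPrefixOf_histN p _)
  have hword : ∀ n j, IsPrefixOf (pairWord (histN p (2 * n)) (candidate q (hk (histN p (2 * n))) j))
      (bpair p t) := fun n j => (isPrefixOf_histN p _).pairWord (candidate_isPrefixOf (hκ n) ht j)
  rw [show p = bpair (diagSeq hk hh q) q from rfl, U_bpair]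
  refine mem_Phi_of_forall_isPrefixOf (fun n => (hcode n).2 ▸ hH.isPrefixOf hy (hword n _))
    (fun m => ?_)
  obtain ⟨N, hN⟩ := hH.exists_length_gt hh_mono hy.fst m
  obtain ⟨-, hub⟩ := ht.fst
  obtain ⟨j, hj, hjN⟩ := hub N
  obtain ⟨M, hM⟩ := hK.exists_length_gt hk_mono hs.fst (wn q j).length
  -- stage `n` guesses the `j`-th output word of `q`, and `K` has read enough of `p` to license it
  set n := Nat.pair j (M + N)
  have hn : M + N ≤ n := Nat.right_le_pair j _
  have hcand : candidate q (hk (histN p (2 * n))) n.unpair.1 = wk q j := by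
    rw [Nat.unpair_pair, candidate, if_pos (hj.prefix_of_length_le (hκ n)
      (hM _ (isPrefixOf_histN p _) (by simp; omega)).le)]
  refine ⟨n, (hcode n).1 ▸ isPrefixOf_histN q n, ?_⟩
  rw [(hcode n).2, hcand]
  exact hN _ (hcand ▸ hword n _) (by simp; omega)

end Diagonal

lemma effectivelyDiscontinuous_of_contWeihrauchRed_DIS {f : Problem}
    (h : ContWeihrauchRed DIS f) : EffectivelyDiscontinuous f := by
  obtain ⟨H, K, ⟨hh, hh_mono, hH⟩, ⟨hk, hk_mono, hK⟩, hred⟩ := h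
  set p := diagPoint hk hh
  have hsol := fun G (hG : Realizes G f) q => exists_mem_of_realizes_DIS (hred G hG) (p q)
  have hdom : ∀ q, (K (p q)).Dom := fun q =>
    let ⟨_, hs, _⟩ := hsol _ (realizes_choiceRealizer f) q
    hs.fst
  refine ⟨fun q => (K (p q)).get (hdom q), ContinuousPF.continuous_get_comp ⟨hk, hk_mono, hK⟩
    continuous_diagPoint hdom,
    fun q => ⟨?_, fun y hy hyf => ?_⟩⟩
  · obtain ⟨s, hs, t, ht, -⟩ := hsol _ (realizes_choiceRealizer f) q
    obtain rfl := Part.get_eq_of_mem hs (hdom q)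
    exact ⟨t, mem_of_mem_choiceRealizer ht⟩
  · obtain ⟨s, hs, t, ht, a, ha, haU⟩ := hsol _ ((realizes_choiceRealizer f).update hyf) q
    obtain rfl := Part.get_eq_of_mem hs (hdom q)
    obtain rfl : t = y := by simpa using ht
    exact haU (mem_U_diagPoint hk_mono hK hh_mono hH hs hy ha)

/-- `DIS ≤*_W f ⟺ DIS ≤*_sW f ⟺ f` is effectively discontinuous. -/
theorem DIS_contRed_iff_effectively_discontinuous (f : Problem) :
    (ContWeihrauchRed DIS f ↔ EffectivelyDiscontinuous f) ∧
    (ContStrongWeihrauchRed DIS f ↔ EffectivelyDiscontinuous f) := by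
  refine ⟨⟨effectivelyDiscontinuous_of_contWeihrauchRed_DIS, fun h => ?_⟩,
    ⟨fun h => effectivelyDiscontinuous_of_contWeihrauchRed_DIS h.contWeihrauchRed,
      contStrongWeihrauchRed_DIS_of_effectivelyDiscontinuous⟩⟩
  exact (contStrongWeihrauchRed_DIS_of_effectivelyDiscontinuous h).contWeihrauchRed
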